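/- Let K be even and let D, m be positive integers with r := K/2 − D > 0 and r dividing D; set p = D/r (so K = 2(p+1)r). Consider the index coding problem with mK messages and antidotes A'_k = {k + iK : 1 ≤ i ≤ m−1} ∪ {k + jr + iK : 1 ≤ j ≤ p, 0 ≤ i ≤ m−1} ⊆ ZMod (mK) for each k ∈ ZMod (mK). Then the set C^(m) = { Σ_{t=0}^{p} e'_{i+(j+t)r} : 1 ≤ i ≤ r, 0 ≤ j ≤ p+1 }, where e'_l = Σ_{t=0}^{m−1} e_{l+tK} ∈ V_{mK}, is a valid scalar linear index code of length K − D for this problem, and moreover every valid scalar linear index code for this problem has length at least K − D. -/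

import Mathlib

/-- Standard basis vector `e_j` of `V_n = ZMod n → GF(2)`. -/
def stdVec (n : ℕ) (j : ZMod n) : ZMod n → ZMod 2 := fun i => if i = j then 1 else 0

/-- `C` is a valid scalar linear index code over `GF(2)` for the index coding problem
with `n` messages and antidote pattern `A`. -/
def IsIndexCode (n : ℕ) (A : ZMod n → Set (ZMod n)) (C : Set (ZMod n → ZMod 2)) : Prop :=
  C.Finite ∧ ∀ k : ZMod n,
    stdVec n k ∈ Submodule.span (ZMod 2) (C ∪ (stdVec n '' A k))

/-- `e'_l = Σ_{t=0}^{m-1} e_{l+tK} ∈ V_{mK}`. -/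
def eSum (K m : ℕ) (l : ℕ) : ZMod (m * K) → ZMod 2 :=
  ∑ t ∈ Finset.range m, stdVec (m * K) ((l + t * K : ℕ))

/-!
Since `e'_l` only depends on `l mod K` and `K = 2(p+1)r`, for fixed `i` the sequence
`s ↦ e'_{i+sr}` has period `2(p+1)`, and the codewords `c_{i,j}` are its windows of length `p+1`
starting at `j = 0, …, p+1`. Two consecutive windows cover a full period, so every window lies in
the span of the code. Receiver `k` decodes from the window starting at `k`: all its other terms
`e'_{k+jr}` (`1 ≤ j ≤ p`), as well as the copies `e_{k+tK}` (`t ≥ 1`) of `e_k` inside `e'_k`, are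
side information.

For optimality, the receivers `0, …, (p+2)r - 1 = K - D - 1` only know messages of larger index, so
the side information restricted to them is acyclic, and each of them forces one more dimension.
-/

open Finset Function

theorem Function.Periodic.sum_range_const_add {M : Type*} [AddCommMonoid M] {f : ℕ → M} {P : ℕ}
    (hf : Periodic f P) (a : ℕ) : ∑ t ∈ range P, f (a + t) = ∑ t ∈ range P, f t := by
  induction a with
  | zero => simp
  | succ a ih =>
    rw [← ih]
    rcases P with _ | P
    · simp
    rw [sum_range_succ, sum_range_succ' (fun t => f (a + t)),
      show a + 1 + P = a + (P + 1) by omega, hf, add_zero]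
    simp only [add_right_comm a 1, add_assoc]

theorem Function.Periodic.sum_range_mem_of_forall_le {M : Type*} [AddCommGroup M] {f : ℕ → M}
    {q : ℕ} (hf : Periodic f (2 * q)) {G : AddSubgroup M}
    (hG : ∀ j ≤ q, ∑ t ∈ range q, f (j + t) ∈ G) {s : ℕ} (hs : s < 2 * q) :
    ∑ t ∈ range q, f (s + t) ∈ G := by
  rcases le_or_gt s q with hsq | hqs
  · exact hG s hsq
  obtain ⟨u, rfl⟩ : ∃ u, s = u + q := ⟨s - q, by omega⟩
  have hfull (a : ℕ) : ∑ t ∈ range q, f (a + t) + ∑ t ∈ range q, f (a + q + t) =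
      ∑ t ∈ range (2 * q), f t := by
    refine Eq.trans ?_ (hf.sum_range_const_add a)
    rw [two_mul, Finset.sum_range_add]
    simp only [add_assoc]
  have hu : ∑ t ∈ range q, f (u + q + t) =
      ∑ t ∈ range q, f (0 + t) + ∑ t ∈ range q, f (0 + q + t) - ∑ t ∈ range q, f (u + t) := by
    rw [hfull, ← hfull u]; abel
  rw [hu, zero_add q]
  exact sub_mem (add_mem (hG 0 (Nat.zero_le q)) (hG q le_rfl)) (hG u (by omega))

theorem IsIndexCode.card_le_ncard_of_acyclic {n : ℕ} {A : ZMod n → Set (ZMod n)}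
    {C : Set (ZMod n → ZMod 2)} (hC : IsIndexCode n A C) (S : Finset (ZMod n))
    (rank : ZMod n → ℕ) (hrank : ∀ k ∈ S, ∀ x ∈ A k, x ∈ S → rank x < rank k) :
    S.card ≤ C.ncard := by
  classical
  let π : (ZMod n → ZMod 2) →ₗ[ZMod 2] (S → ZMod 2) :=
    LinearMap.funLeft (ZMod 2) (ZMod 2) Subtype.val
  have hπ_out {x : ZMod n} (hx : x ∉ S) : π (stdVec n x) = 0 := by
    funext s
    exact if_neg fun h : (s : ZMod n) = x => hx (h ▸ s.2)
  have hπ_in (s : S) : π (stdVec n s) = Pi.basisFun (ZMod 2) S s := by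
    funext s'
    simp only [π, LinearMap.funLeft_apply, stdVec, Pi.basisFun_apply,
      Pi.single_apply, Subtype.ext_iff]
  have hmem (k : S) : Pi.basisFun (ZMod 2) S k ∈ Submodule.span (ZMod 2) (π '' C) := by
    induction hk : rank k using Nat.strong_induction_on generalizing k with
    | _ N ih =>
      rw [← hπ_in]
      refine Submodule.span_le.2 ?_ (Submodule.apply_mem_span_image_of_mem_span π (hC.2 k))
      rintro _ ⟨y, hy | ⟨x, hx, rfl⟩, rfl⟩
      · exact Submodule.subset_span ⟨y, hy, rfl⟩
      by_cases hxS : x ∈ S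
      · exact hπ_in ⟨x, hxS⟩ ▸ ih _ (hk ▸ hrank k k.2 x hx hxS) ⟨x, hxS⟩ rfl
      · exact hπ_out hxS ▸ zero_mem _
  have htop : Submodule.span (ZMod 2) (π '' C) = ⊤ :=
    eq_top_iff.2 ((Pi.basisFun (ZMod 2) S).span_eq.symm.le.trans
      (Submodule.span_le.2 (Set.range_subset_iff.2 hmem)))
  have hfin := hC.1.image π
  calc S.card = Module.finrank (ZMod 2) (Submodule.span (ZMod 2) (π '' C)) := by
        rw [htop, finrank_top]; simp
    _ ≤ (π '' C).ncard := by
        rw [← hfin.coe_toFinset, Set.ncard_coe_finset]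
        exact finrank_span_finset_le_card _
    _ ≤ C.ncard := Set.ncard_image_le hC.1

theorem Nat.exists_add_mul_mod_eq {r Q : ℕ} (hr : 0 < r) (hQ : 0 < Q) (v : ℕ) :
    ∃ i s, 1 ≤ i ∧ i ≤ r ∧ s < Q ∧ (i + s * r) % (Q * r) = v % (Q * r) := by
  have hN : 0 < Q * r := Nat.mul_pos hQ hr
  set w := (v + Q * r - 1) % (Q * r)
  have hw : w < Q * r := Nat.mod_lt _ hN
  refine ⟨w % r + 1, w / r, by omega, Nat.mod_lt _ hr, (Nat.div_lt_iff_lt_mul hr).2 hw, ?_⟩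
  rw [show w % r + 1 + w / r * r = w + 1 by rw [add_right_comm, Nat.mod_add_div'], Nat.mod_add_mod,
    show v + Q * r - 1 + 1 = v + Q * r by omega, Nat.add_mod_right]

theorem Nat.eq_of_add_mul_mod_eq {r Q i s i' s' : ℕ} (hi : 1 ≤ i) (hir : i ≤ r) (hs : s < Q)
    (hi' : 1 ≤ i') (hir' : i' ≤ r) (hs' : s' < Q)
    (h : (i + s * r) % (Q * r) = (i' + s' * r) % (Q * r)) : i = i' ∧ s = s' := by
  have hlt {a b : ℕ} (ha : 1 ≤ a) (har : a ≤ r) (hb : b < Q) : a - 1 + b * r < Q * r :=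
    calc a - 1 + b * r < (b + 1) * r := by rw [add_mul]; omega
      _ ≤ Q * r := Nat.mul_le_mul_right r hb
  have heq : i - 1 + s * r = i' - 1 + s' * r := by
    have := Nat.ModEq.add_right_cancel' 1
      (show i - 1 + s * r + 1 ≡ i' - 1 + s' * r + 1 [MOD Q * r] by
        unfold Nat.ModEq; convert h using 2 <;> omega)
    rwa [Nat.ModEq, Nat.mod_eq_of_lt (hlt hi hir hs), Nat.mod_eq_of_lt (hlt hi' hir' hs')] at this
  have hmod := congrArg (· % r) heq
  have hdiv := congrArg (· / r) heq
  have hr : 0 < r := by omega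
  simp only [Nat.add_mul_mod_self_right, Nat.add_mul_div_right _ _ hr] at hmod hdiv
  rw [Nat.mod_eq_of_lt (by omega), Nat.mod_eq_of_lt (by omega)] at hmod
  rw [Nat.div_eq_of_lt (by omega), Nat.div_eq_of_lt (by omega)] at hdiv
  omega

theorem eSum_periodic (K m : ℕ) : Periodic (eSum K m) K := fun l => by
  have hg : Periodic (fun t : ℕ => stdVec (m * K) ((l + t * K : ℕ))) m := fun t => by
    simp [add_mul]
  rw [eSum, eSum, ← hg.sum_range_const_add 1]
  refine sum_congr rfl fun t _ => ?_
  congr 2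
  ring

theorem eSum_apply {K m : ℕ} (hK : 0 < K) (hm : 0 < m) (l : ℕ) (x : ZMod (m * K)) :
    eSum K m l x = if x.val % K = l % K then 1 else 0 := by
  have : NeZero (m * K) := ⟨(Nat.mul_pos hm hK).ne'⟩
  rw [← (eSum_periodic K m).map_mod_nat l, eSum, Finset.sum_apply]
  have hl : l % K < K := Nat.mod_lt l hK
  have hterm (t : ℕ) (ht : t ∈ range m) : stdVec (m * K) ((l % K + t * K : ℕ)) x =
      if x.val / K = t then (if x.val % K = l % K then 1 else 0) else 0 := by
    have hlt : l % K + t * K < m * K :=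
      calc l % K + t * K < (t + 1) * K := by rw [add_mul]; omega
        _ ≤ m * K := Nat.mul_le_mul_right K (mem_range.1 ht)
    have hiff : x = ((l % K + t * K : ℕ) : ZMod (m * K)) ↔ x.val / K = t ∧ x.val % K = l % K := by
      rw [← (ZMod.val_injective _).eq_iff, ZMod.val_cast_of_lt hlt, Nat.div_mod_unique hK,
        mul_comm K]
      simp only [hl, and_true, eq_comm]
    rw [← ite_and]
    exact if_congr hiff rfl rfl
  rw [sum_congr rfl hterm, sum_ite_eq, if_pos]
  exact mem_range.2 (Nat.div_lt_of_lt_mul (mul_comm m K ▸ x.val_lt))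

def liftedAntidotes (K m r p : ℕ) (k : ZMod (m * K)) : Set (ZMod (m * K)) :=
  {x | ∃ i : ℕ, 1 ≤ i ∧ i ≤ m - 1 ∧ x = k + (i * K : ℕ)} ∪
    {x | ∃ j i : ℕ, 1 ≤ j ∧ j ≤ p ∧ i ≤ m - 1 ∧ x = k + (j * r + i * K : ℕ)}

def liftedCodeword (K m r p i j : ℕ) : ZMod (m * K) → ZMod 2 :=
  ∑ t ∈ range (p + 1), eSum K m (i + (j + t) * r)

def liftedCode (K m r p : ℕ) : Set (ZMod (m * K) → ZMod 2) :=
  {v | ∃ i j : ℕ, 1 ≤ i ∧ i ≤ r ∧ j ≤ p + 1 ∧ v = liftedCodeword K m r p i j}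

theorem liftedCode_eq_image (K m r p : ℕ) :
    liftedCode K m r p =
      (fun ij : ℕ × ℕ => liftedCodeword K m r p ij.1 ij.2) '' ↑(Icc 1 r ×ˢ range (p + 2)) := by
  ext v
  simp only [liftedCode, Set.mem_ofPred_eq, Set.mem_image, coe_product, Set.mem_prod, mem_coe,
    mem_Icc, mem_range, Prod.exists]
  grind

section LiftedProblem

variable {K m r p : ℕ}

theorem liftedCodeword_apply_natCast (hm : 0 < m) (hr : 0 < r) (hK : K = 2 * (p + 1) * r)
    {i j i' j' : ℕ} (hi : 1 ≤ i) (hir : i ≤ r) (hj : j ≤ p + 1)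
    (hi' : 1 ≤ i') (hir' : i' ≤ r) (hj' : j' ≤ p + 1) :
    liftedCodeword K m r p i' j' ((i + j * r : ℕ) : ZMod (m * K)) =
      ∑ t ∈ range (p + 1), if i' = i ∧ j' + t = j then 1 else 0 := by
  rw [liftedCodeword, Finset.sum_apply]
  refine sum_congr rfl fun t ht => ?_
  rw [eSum_apply (by rw [hK]; positivity) hm, ZMod.val_natCast, Nat.mod_mul_left_mod]
  refine if_congr ?_ rfl rfl
  rw [hK]
  constructor
  · intro h
    have := Nat.eq_of_add_mul_mod_eq hi hir (by omega) hi' hir'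
      (by have := mem_range.1 ht; omega) h
    omega
  · rintro ⟨rfl, rfl⟩; rfl

theorem liftedCodeword_injOn (hm : 0 < m) (hr : 0 < r) (hK : K = 2 * (p + 1) * r) :
    Set.InjOn (fun ij : ℕ × ℕ => liftedCodeword K m r p ij.1 ij.2) ↑(Icc 1 r ×ˢ range (p + 2)) := by
  have key {i j i' j' : ℕ} (hi : 1 ≤ i) (hir : i ≤ r) (hj : j ≤ p + 1)
      (hi' : 1 ≤ i') (hir' : i' ≤ r) (hj' : j' ≤ p + 1)
      (h : liftedCodeword K m r p i j = liftedCodeword K m r p i' j') : i' = i ∧ j' ≤ j := by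
    have hself := liftedCodeword_apply_natCast hm hr hK hi hir hj hi hir hj
    have hother := liftedCodeword_apply_natCast hm hr hK hi hir hj hi' hir' hj'
    simp only [true_and, add_eq_left, sum_ite_eq', mem_range, Nat.zero_lt_succ, if_true] at hself
    rw [← h, hself] at hother
    obtain ⟨t, -, ht⟩ := exists_ne_zero_of_sum_ne_zero (hother ▸ one_ne_zero)
    have := (ite_ne_right_iff.1 ht).1
    omega
  rintro ⟨i, j⟩ hij ⟨i', j'⟩ hij' h
  simp only [coe_product, Set.mem_prod, mem_coe, mem_Icc, mem_range] at hij hij'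
  have h₁ := key hij.1.1 hij.1.2 (by omega) hij'.1.1 hij'.1.2 (by omega) h
  have h₂ := key hij'.1.1 hij'.1.2 (by omega) hij.1.1 hij.1.2 (by omega) h.symm
  simp only [Prod.mk.injEq]
  omega

theorem liftedCode_ncard (hm : 0 < m) (hr : 0 < r) (hK : K = 2 * (p + 1) * r) :
    (liftedCode K m r p).ncard = (p + 2) * r := by
  rw [liftedCode_eq_image, (liftedCodeword_injOn hm hr hK).ncard_image,
    Set.ncard_coe_finset, card_product, Nat.card_Icc, card_range, Nat.add_sub_cancel, mul_comm]

theorem lt_val_of_mem_liftedAntidotes (hm : 0 < m) (hK : K = 2 * (p + 1) * r) {w : ℕ}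
    (hw : w < (p + 2) * r) {x : ZMod (m * K)} (hx : x ∈ liftedAntidotes K m r p w) :
    w < x.val := by
  have hshift {d : ℕ} (hd : 0 < d) (hlt : w + d < m * K) : w < ((w : ZMod (m * K)) + d).val := by
    rw [← Nat.cast_add, ZMod.val_cast_of_lt hlt]
    omega
  have hmK : (m - 1) * K + K = m * K := by
    rw [← Nat.succ_mul, Nat.succ_eq_add_one, Nat.sub_add_cancel hm]
  have hr : 0 < r := Nat.pos_of_ne_zero (by rintro rfl; simp at hw)
  have hwK : w + p * r < K := by rw [hK]; nlinarith
  rcases hx with ⟨i, hi, him, rfl⟩ | ⟨j, i, hj, hjp, him, rfl⟩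
  · have := Nat.mul_le_mul_right K him
    exact hshift (by nlinarith) (by nlinarith)
  · have := Nat.mul_le_mul_right K him
    have := Nat.mul_le_mul_right r hjp
    exact hshift (by nlinarith) (by nlinarith)

theorem le_ncard_of_isIndexCode_liftedAntidotes (hm : 0 < m) (hK : K = 2 * (p + 1) * r)
    {C : Set (ZMod (m * K) → ZMod 2)} (hC : IsIndexCode (m * K) (liftedAntidotes K m r p) C) :
    (p + 2) * r ≤ C.ncard := by
  have hN : (p + 2) * r ≤ m * K := by
    rw [hK]; nlinarith
  have hval {w : ℕ} (hw : w < (p + 2) * r) : (w : ZMod (m * K)).val = w :=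
    ZMod.val_cast_of_lt (by omega)
  let S := (range ((p + 2) * r)).image (Nat.cast : ℕ → ZMod (m * K))
  have hS : S.card = (p + 2) * r := by
    rw [card_image_of_injOn, card_range]
    intro a ha b hb hab
    rw [← hval (mem_range.1 ha), ← hval (mem_range.1 hb), hab]
  rw [← hS]
  refine hC.card_le_ncard_of_acyclic S (fun x => (p + 2) * r - x.val) ?_
  intro k hk x hx hxS
  obtain ⟨w, hw, rfl⟩ := mem_image.1 hk
  obtain ⟨w', hw', rfl⟩ := mem_image.1 hxS
  rw [mem_range] at hw hw'
  have hlt := lt_val_of_mem_liftedAntidotes hm hK hw hx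
  rw [hval hw'] at hlt ⊢
  rw [hval hw]
  omega

theorem liftedCode_isIndexCode (hm : 0 < m) (hr : 0 < r) (hK : K = 2 * (p + 1) * r) :
    IsIndexCode (m * K) (liftedAntidotes K m r p) (liftedCode K m r p) := by
  refine ⟨liftedCode_eq_image K m r p ▸ (finite_toSet _).image _, fun k => ?_⟩
  have : NeZero (m * K) := ⟨(Nat.mul_pos hm (by rw [hK]; positivity)).ne'⟩
  set V := Submodule.span (ZMod 2)
    (liftedCode K m r p ∪ stdVec (m * K) '' liftedAntidotes K m r p k)
  set v := k.val
  have hv : (v : ZMod (m * K)) = k := ZMod.natCast_zmod_val k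
  obtain ⟨m, rfl⟩ : ∃ m', m = m' + 1 := ⟨m - 1, by omega⟩
  have hanti {d : ℕ} (hd : k + (d : ZMod _) ∈ liftedAntidotes K (m + 1) r p k) :
      stdVec ((m + 1) * K) ((v + d : ℕ)) ∈ V :=
    Submodule.subset_span (Or.inr ⟨_, hd, by rw [Nat.cast_add, hv]⟩)
  have hshift {j : ℕ} (hj : 1 ≤ j) (hjp : j ≤ p) : eSum K (m + 1) (v + j * r) ∈ V :=
    Submodule.sum_mem _ fun i hi => by
      rw [add_assoc]
      exact hanti (Or.inr ⟨j, i, hj, hjp, by have := mem_range.1 hi; omega, rfl⟩)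
  have hwindow : ∑ t ∈ range (p + 1), eSum K (m + 1) (v + t * r) ∈ V := by
    obtain ⟨i, s, hi, hir, hs, hmod⟩ :=
      Nat.exists_add_mul_mod_eq hr (by omega : 0 < 2 * (p + 1)) v
    rw [← hK] at hmod
    have hf : Periodic (fun x => eSum K (m + 1) (i + x * r)) (2 * (p + 1)) := fun x => by
      dsimp only
      rw [show i + (x + 2 * (p + 1)) * r = i + x * r + K by rw [hK]; ring]
      exact eSum_periodic K _ _
    have hwin := hf.sum_range_mem_of_forall_le (G := V.toAddSubgroup)
      (fun j hj => Submodule.subset_span (Or.inl ⟨i, j, hi, hir, hj, rfl⟩)) hs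
    suffices ∀ t, eSum K (m + 1) (v + t * r) = eSum K (m + 1) (i + (s + t) * r) by
      simpa only [this, Submodule.mem_toAddSubgroup] using hwin
    intro t
    rw [← (eSum_periodic K _).map_mod_nat, ← (eSum_periodic K _).map_mod_nat (i + (s + t) * r),
      show i + (s + t) * r = i + s * r + t * r by ring]
    exact congrArg _ (Nat.ModEq.add_right (t * r) hmod).symm
  have hk : stdVec ((m + 1) * K) k =
      eSum K (m + 1) v - ∑ t ∈ range m, stdVec ((m + 1) * K) ((v + (t + 1) * K : ℕ)) := by
    rw [eSum, sum_range_succ', zero_mul, add_zero, hv, add_sub_cancel_left]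
  have hv' : eSum K (m + 1) v = ∑ t ∈ range (p + 1), eSum K (m + 1) (v + t * r) -
      ∑ t ∈ range p, eSum K (m + 1) (v + (t + 1) * r) := by
    rw [sum_range_succ', zero_mul, add_zero, add_sub_cancel_left]
  rw [hk, hv']
  refine sub_mem (sub_mem hwindow (sum_mem fun t ht => hshift (by omega) ?_))
    (sum_mem fun t ht => hanti (Or.inl ⟨t + 1, by omega, ?_, rfl⟩)) <;>
  simp only [mem_range] at ht <;> omega

end LiftedProblem

theorem lifted_code_class_i_general (K D m : ℕ) (hm : 0 < m)
    (hKeven : 2 ∣ K) (hr : 0 < K / 2 - D) (hrD : (K / 2 - D) ∣ D) :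
    (IsIndexCode (m * K)
        (fun k => {x | ∃ i : ℕ, 1 ≤ i ∧ i ≤ m - 1 ∧ x = k + (i * K : ℕ)} ∪
          {x | ∃ j i : ℕ, 1 ≤ j ∧ j ≤ D / (K / 2 - D) ∧ i ≤ m - 1 ∧
            x = k + (j * (K / 2 - D) + i * K : ℕ)})
        {v | ∃ i j : ℕ, 1 ≤ i ∧ i ≤ K / 2 - D ∧ j ≤ D / (K / 2 - D) + 1 ∧
          v = ∑ t ∈ Finset.range (D / (K / 2 - D) + 1),
            eSum K m (i + (j + t) * (K / 2 - D))} ∧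
      ({v | ∃ i j : ℕ, 1 ≤ i ∧ i ≤ K / 2 - D ∧ j ≤ D / (K / 2 - D) + 1 ∧
          v = ∑ t ∈ Finset.range (D / (K / 2 - D) + 1),
            eSum K m (i + (j + t) * (K / 2 - D))} :
        Set (ZMod (m * K) → ZMod 2)).ncard = K - D) ∧
    (∀ C' : Set (ZMod (m * K) → ZMod 2),
      IsIndexCode (m * K)
        (fun k => {x | ∃ i : ℕ, 1 ≤ i ∧ i ≤ m - 1 ∧ x = k + (i * K : ℕ)} ∪
          {x | ∃ j i : ℕ, 1 ≤ j ∧ j ≤ D / (K / 2 - D) ∧ i ≤ m - 1 ∧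
            x = k + (j * (K / 2 - D) + i * K : ℕ)}) C' →
        K - D ≤ C'.ncard) := by
  set r := K / 2 - D
  set p := D / r
  have hD : D = p * r := (Nat.div_mul_cancel hrD).symm
  have hK : K = 2 * (p + 1) * r := by
    calc K = 2 * (D + r) := by omega
      _ = 2 * (p + 1) * r := by rw [hD]; ring
  have hKD : K - D = (p + 2) * r := by
    have : K = D + (p + 2) * r := by rw [hK, hD]; ring
    omega
  rw [hKD]
  exact ⟨⟨liftedCode_isIndexCode hm hr hK, liftedCode_ncard hm hr hK⟩,
    fun C hC => le_ncard_of_isIndexCode_liftedAntidotes hm hK hC⟩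

/-- **Class (i) lifted (Corollary 4).** For `K` even, `r = K/2 - D > 0` and `r ∣ D`
with `p = D/r`, the lifted code `{Σ_{t=0}^{p} e'_{i+(j+t)r} : 1 ≤ i ≤ r, 0 ≤ j ≤ p+1}`
is a valid scalar linear index code of optimal length `K - D` for the lifted problem on
`m*K` messages with antidotes `{k+iK : 1 ≤ i ≤ m-1} ∪ {k+jr+iK : 1 ≤ j ≤ p, 0 ≤ i ≤ m-1}`. -/
theorem lifted_code_class_i (K D m : ℕ) (hK : 0 < K) (hD : 0 < D) (hm : 0 < m)
    (hKeven : 2 ∣ K) (hr : 0 < K / 2 - D) (hrD : (K / 2 - D) ∣ D) :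
    (IsIndexCode (m * K)
        (fun k => {x | ∃ i : ℕ, 1 ≤ i ∧ i ≤ m - 1 ∧ x = k + (i * K : ℕ)} ∪
          {x | ∃ j i : ℕ, 1 ≤ j ∧ j ≤ D / (K / 2 - D) ∧ i ≤ m - 1 ∧
            x = k + (j * (K / 2 - D) + i * K : ℕ)})
        {v | ∃ i j : ℕ, 1 ≤ i ∧ i ≤ K / 2 - D ∧ j ≤ D / (K / 2 - D) + 1 ∧
          v = ∑ t ∈ Finset.range (D / (K / 2 - D) + 1),
            eSum K m (i + (j + t) * (K / 2 - D))} ∧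
      ({v | ∃ i j : ℕ, 1 ≤ i ∧ i ≤ K / 2 - D ∧ j ≤ D / (K / 2 - D) + 1 ∧
          v = ∑ t ∈ Finset.range (D / (K / 2 - D) + 1),
            eSum K m (i + (j + t) * (K / 2 - D))} :
        Set (ZMod (m * K) → ZMod 2)).ncard = K - D) ∧
    (∀ C' : Set (ZMod (m * K) → ZMod 2),
      IsIndexCode (m * K)
        (fun k => {x | ∃ i : ℕ, 1 ≤ i ∧ i ≤ m - 1 ∧ x = k + (i * K : ℕ)} ∪
          {x | ∃ j i : ℕ, 1 ≤ j ∧ j ≤ D / (K / 2 - D) ∧ i ≤ m - 1 ∧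
            x = k + (j * (K / 2 - D) + i * K : ℕ)}) C' →
        K - D ≤ C'.ncard) :=
  lifted_code_class_i_general K D m hm hKeven hr hrD
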